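/- Let G be a finite simple undirected graph and let p, u, v be distinct vertices that are pairwise non-adjacent. Suppose that κ(p,u) ≤ κ(p,v), that there exists a minimum pu-separator C (i.e., |C| = κ(p,u)) with v ∉ C that is not a pv-separator (i.e., there is a path in G from p to v avoiding C), and that there exists a minimum uv-separator not containing p. Then κ(u,v) = κ(p,u). -/

import Mathlib

/-!
The minimum `pu`-separator `C` is also a `uv`-separator, since `v` is joined to `p` outside `C`;
so `κ(u,v) ≤ κ(p,u)`. Conversely, a minimum `uv`-separator `D` with `p ∉ D` separates `p` from `u`
or, if some `p`-`u` walk avoids it, `p` from `v`; either way `κ(p,u) ≤ |D| = κ(u,v)`,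
using `κ(p,u) ≤ κ(p,v)` in the second case.
-/

/-- `C` is an `xy`-separator in the simple graph `G`: `x ∉ C`, `y ∉ C`, and every walk in
`G` from `x` to `y` passes through a vertex of `C`. -/
def IsSeparator {V : Type*} (G : SimpleGraph V) (x y : V) (C : Set V) : Prop :=
  x ∉ C ∧ y ∉ C ∧ ∀ w : G.Walk x y, ∃ c ∈ C, c ∈ w.support

/-- For non-adjacent distinct vertices `x, y`, the vertex connectivity `κ(x,y)`: the
minimum cardinality of an `xy`-separator. -/
noncomputable def vertexConn {V : Type*} (G : SimpleGraph V) (x y : V) : ℕ :=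
  sInf {n : ℕ | ∃ C : Set V, IsSeparator G x y C ∧ C.ncard = n}

namespace IsSeparator

variable {V : Type*} {G : SimpleGraph V} {x y z : V} {C : Set V}

theorem symm (hC : IsSeparator G x y C) : IsSeparator G y x C := by
  refine ⟨hC.2.1, hC.1, fun w => ?_⟩
  obtain ⟨c, hcC, hc⟩ := hC.2.2 w.reverse
  exact ⟨c, hcC, by simpa using hc⟩

theorem of_walk_avoiding (hC : IsSeparator G x y C) (w : G.Walk x z)
    (hw : ∀ c ∈ C, c ∉ w.support) : IsSeparator G z y C := by
  refine ⟨fun hz => hw z hz w.end_mem_support, hC.2.1, fun w' => ?_⟩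
  obtain ⟨c, hcC, hc⟩ := hC.2.2 (w.append w')
  rcases (SimpleGraph.Walk.mem_support_append_iff w w').1 hc with hcw | hcw'
  · exact absurd hcw (hw c hcC)
  · exact ⟨c, hcC, hcw'⟩

theorem exists_walk_avoiding_of_not (hx : x ∉ C) (hy : y ∉ C) (hC : ¬IsSeparator G x y C) :
    ∃ w : G.Walk x y, ∀ c ∈ C, c ∉ w.support := by
  simpa [IsSeparator, hx, hy] using hC

end IsSeparator

theorem vertexConn_le_ncard {V : Type*} {G : SimpleGraph V} {x y : V} {C : Set V}
    (hC : IsSeparator G x y C) : vertexConn G x y ≤ C.ncard :=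
  Nat.sInf_le ⟨C, hC, rfl⟩

theorem maxflow_determined_general {V : Type*}
    (G : SimpleGraph V) (p u v : V)
    (hle : vertexConn G p u ≤ vertexConn G p v)
    (hCpu : ∃ C : Set V, IsSeparator G p u C ∧ C.ncard = vertexConn G p u ∧ v ∉ C ∧
      ∃ w : G.Walk p v, ∀ c ∈ C, c ∉ w.support)
    (hCuv : ∃ C : Set V, IsSeparator G u v C ∧ C.ncard = vertexConn G u v ∧ p ∉ C) :
    vertexConn G u v = vertexConn G p u := by
  obtain ⟨C, hC, hCcard, -, w, hw⟩ := hCpu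
  obtain ⟨D, hD, hDcard, hpD⟩ := hCuv
  refine le_antisymm (hCcard ▸ vertexConn_le_ncard (hC.of_walk_avoiding w hw).symm) ?_
  rw [← hDcard]
  by_cases hDpu : IsSeparator G p u D
  · exact vertexConn_le_ncard hDpu
  · obtain ⟨w', hw'⟩ := IsSeparator.exists_walk_avoiding_of_not hpD hD.1 hDpu
    have hDpv : IsSeparator G p v D := hD.of_walk_avoiding w'.reverse (by simpa using hw')
    exact hle.trans (vertexConn_le_ncard hDpv)

/-- Let `p, u, v` be distinct, pairwise non-adjacent vertices of a finite
simple graph `G`. Suppose `κ(p,u) ≤ κ(p,v)`, there is a minimum `pu`-separator `C` with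
`v ∉ C` that is not a `pv`-separator (some walk from `p` to `v` avoids `C`), and some
minimum `uv`-separator avoids `p`. Then `κ(u,v) = κ(p,u)`. -/
theorem maxflow_determined {V : Type*} [Fintype V]
    (G : SimpleGraph V) (p u v : V)
    (hpu : p ≠ u) (hpv : p ≠ v) (huv : u ≠ v)
    (hapu : ¬ G.Adj p u) (hapv : ¬ G.Adj p v) (hauv : ¬ G.Adj u v)
    (hle : vertexConn G p u ≤ vertexConn G p v)
    (hCpu : ∃ C : Set V, IsSeparator G p u C ∧ C.ncard = vertexConn G p u ∧ v ∉ C ∧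
      ∃ w : G.Walk p v, ∀ c ∈ C, c ∉ w.support)
    (hCuv : ∃ C : Set V, IsSeparator G u v C ∧ C.ncard = vertexConn G u v ∧ p ∉ C) :
    vertexConn G u v = vertexConn G p u :=
  maxflow_determined_general G p u v hle hCpu hCuv
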